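/- Let m ≥ 1 be an integer and write P_μ^m(η) = α + βη + γη² + δη³ + εη⁴ (type IV₄); set F_m(μ) = (ε+δ+γ+β)[(ε+δ+γ)(ε+δ) − εβ] − (2ε+δ)²α, the Hurwitz determinant Δ₃ of P_μ^m. For m > 4, F_m(μ) > 0 for all μ > 0. For 1 ≤ m ≤ 4 and μ > 0, one has [F_m(μ) > 0 and q_m¹(μ) ≥ 0] if and only if μ ≤ μ_m¹, where q_m¹(μ) = (1/((m+1)μ))·(dP_μ^m/dη)(1/2) = [4+(m−1)μ]·(7 + 4(m−1)μ + ((m²−5m−4)/2)μ²) and μ_m¹ is the unique positive root of q_m¹. -/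
import Mathlib


/-- Degree-0 coefficient `α` of the type `IV₄` representative polynomial. -/
noncomputable def coeffA (μ : ℝ) : ℝ := (1 - μ) * (2 - μ) ^ 2 * (3 - μ)

/-- Degree-1 coefficient `β` of the type `IV₄` representative polynomial. -/
noncomputable def coeffB (m : ℕ) (μ : ℝ) : ℝ :=
  ((m : ℝ) + 1) * (1 - μ) * (7 - 5 * μ) * (4 - 3 * μ) * μ

/-- Degree-2 coefficient `γ` of the type `IV₄` representative polynomial. -/
noncomputable def coeffC (m : ℕ) (μ : ℝ) : ℝ :=
  ((m : ℝ) + 1) * ((m : ℝ) + 2) * (1 - μ) * (23 - 25 * μ) * μ ^ 2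

/-- Degree-3 coefficient `δ` of the type `IV₄` representative polynomial. -/
noncomputable def coeffD (m : ℕ) (μ : ℝ) : ℝ :=
  2 * ((m : ℝ) + 1) * ((m : ℝ) + 2) * ((m : ℝ) + 3) * (4 - 5 * μ) * μ ^ 3

/-- Degree-4 coefficient `ε` of the type `IV₄` representative polynomial. -/
noncomputable def coeffE (m : ℕ) (μ : ℝ) : ℝ :=
  ((m : ℝ) + 1) * ((m : ℝ) + 2) * ((m : ℝ) + 3) * ((m : ℝ) + 4) * μ ^ 4

/-- The representative polynomial `P_μ^m` of type `IV₄` (real variable). -/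
noncomputable def PIV4 (m : ℕ) (μ η : ℝ) : ℝ :=
  coeffA μ + coeffB m μ * η + coeffC m μ * η ^ 2 + coeffD m μ * η ^ 3 +
    coeffE m μ * η ^ 4

/-- Hurwitz determinant
`Δ₃ = (ε+δ+γ+β)[(ε+δ+γ)(ε+δ) - εβ] - (2ε+δ)²α` of `P_μ^m` (type `IV₄`). -/
noncomputable def FIV4 (m : ℕ) (μ : ℝ) : ℝ :=
  (coeffE m μ + coeffD m μ + coeffC m μ + coeffB m μ) *
      ((coeffE m μ + coeffD m μ + coeffC m μ) * (coeffE m μ + coeffD m μ) -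
        coeffE m μ * coeffB m μ) -
    (2 * coeffE m μ + coeffD m μ) ^ 2 * coeffA μ

/-- `q_m¹(μ) = [4+(m-1)μ]·(7 + 4(m-1)μ + ((m²-5m-4)/2)μ²)` for type `IV₄`. -/
noncomputable def qIV4' (m : ℕ) (μ : ℝ) : ℝ :=
  (4 + ((m : ℝ) - 1) * μ) *
    (7 + 4 * ((m : ℝ) - 1) * μ + (((m : ℝ) ^ 2 - 5 * (m : ℝ) - 4) / 2) * μ ^ 2)


set_option maxHeartbeats 1000000 in
set_option maxRecDepth 8000 in
lemma Gaux_nonneg (x u : ℝ) (hx : 0 ≤ x) (hu : 0 ≤ u) :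
    (0:ℝ) ≤ 1641056256 * u ^ 1 + 3879816192 * u ^ 2 + 4365914112 * u ^ 3 + 2348623872 * u ^ 4 + 498548736 * u ^ 5 + 12902400 * u ^ 6 + 246911616 * x ^ 1 + 1946687232 * x ^ 1 * u ^ 1 + 5693583744 * x ^ 1 * u ^ 2 + 7844863488 * x ^ 1 * u ^ 3 + 5224113408 * x ^ 1 * u ^ 4 + 1476937728 * x ^ 1 * u ^ 5 + 103879680 * x ^ 1 * u ^ 6 + 95860032 * x ^ 2 + 981555136 * x ^ 2 * u ^ 1 + 3607477056 * x ^ 2 * u ^ 2 + 6136311680 * x ^ 2 * u ^ 3 + 5039925376 * x ^ 2 * u ^ 4 + 1817057280 * x ^ 2 * u ^ 5 + 196778240 * x ^ 2 * u ^ 6 + 19786592 * x ^ 3 + 272867680 * x ^ 3 * u ^ 1 + 1290753128 * x ^ 3 * u ^ 2 + 2750701504 * x ^ 3 * u ^ 3 + 2799236176 * x ^ 3 * u ^ 4 + 1265342336 * x ^ 3 * u ^ 5 + 185447360 * x ^ 3 * u ^ 6 + 2290032 * x ^ 4 + 45190544 * x ^ 4 * u ^ 1 + 285556180 * x ^ 4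 * u ^ 2 + 780477600 * x ^ 4 * u ^ 3 + 996443528 * x ^ 4 * u ^ 4 + 563356480 * x ^ 4 * u ^ 5 + 106646736 * x ^ 4 * u ^ 6 + 140896 * x ^ 5 + 4460408 * x ^ 5 * u ^ 1 + 40033582 * x ^ 5 * u ^ 2 + 145610864 * x ^ 5 * u ^ 3 + 238414340 * x ^ 5 * u ^ 4 + 170013056 * x ^ 5 * u ^ 5 + 40924400 * x ^ 5 * u ^ 6 + 3600 * x ^ 6 + 243024 * x ^ 6 * u ^ 1 + 3475735 * x ^ 6 * u ^ 2 + 17886400 * x ^ 6 * u ^ 3 + 38934630 * x ^ 6 * u ^ 4 + 35708912 * x ^ 6 * u ^ 5 + 10946860 * x ^ 6 * u ^ 6 + 5640 * x ^ 7 * u ^ 1 + 170958 * x ^ 7 * u ^ 2 + 1396416 * x ^ 7 * u ^ 3 + 4293838 * x ^ 7 * u ^ 4 + 5242200 * x ^ 7 * u ^ 5 + 2078780 * x ^ 7 * u ^ 6 + 3649 * x ^ 8 * u ^ 2 + 62928 * x ^ 8 * u ^ 3 + 306524 * x ^ 8 * u ^ 4 + 528744 * x ^ 8 * u ^ 5 +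 280038 * x ^ 8 * u ^ 6 + 1248 * x ^ 9 * u ^ 3 + 12806 * x ^ 9 * u ^ 4 + 34976 * x ^ 9 * u ^ 5 + 26220 * x ^ 9 * u ^ 6 + 238 * x ^ 10 * u ^ 4 + 1368 * x ^ 10 * u ^ 5 + 1625 * x ^ 10 * u ^ 6 + 24 * x ^ 11 * u ^ 5 + 60 * x ^ 11 * u ^ 6 + 1 * x ^ 12 * u ^ 6 := by
  have t0 : (0:ℝ) ≤ 1641056256 * u ^ 1 := mul_nonneg (by norm_num) (pow_nonneg hu 1)
  have t1 : (0:ℝ) ≤ 3879816192 * u ^ 2 := mul_nonneg (by norm_num) (pow_nonneg hu 2)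
  have t2 : (0:ℝ) ≤ 4365914112 * u ^ 3 := mul_nonneg (by norm_num) (pow_nonneg hu 3)
  have t3 : (0:ℝ) ≤ 2348623872 * u ^ 4 := mul_nonneg (by norm_num) (pow_nonneg hu 4)
  have t4 : (0:ℝ) ≤ 498548736 * u ^ 5 := mul_nonneg (by norm_num) (pow_nonneg hu 5)
  have t5 : (0:ℝ) ≤ 12902400 * u ^ 6 := mul_nonneg (by norm_num) (pow_nonneg hu 6)
  have t6 : (0:ℝ) ≤ 246911616 * x ^ 1 := mul_nonneg (by norm_num) (pow_nonneg hx 1)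
  have t7 : (0:ℝ) ≤ 1946687232 * x ^ 1 * u ^ 1 := mul_nonneg (mul_nonneg (by norm_num) (pow_nonneg hx 1)) (pow_nonneg hu 1)
  have t8 : (0:ℝ) ≤ 5693583744 * x ^ 1 * u ^ 2 := mul_nonneg (mul_nonneg (by norm_num) (pow_nonneg hx 1)) (pow_nonneg hu 2)
  have t9 : (0:ℝ) ≤ 7844863488 * x ^ 1 * u ^ 3 := mul_nonneg (mul_nonneg (by norm_num) (pow_nonneg hx 1)) (pow_nonneg hu 3)
  have t10 : (0:ℝ) ≤ 5224113408 * x ^ 1 * u ^ 4 := mul_nonneg (mul_nonneg (by norm_num) (pow_nonneg hx 1)) (pow_nonneg hu 4)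
  have t11 : (0:ℝ) ≤ 1476937728 * x ^ 1 * u ^ 5 := mul_nonneg (mul_nonneg (by norm_num) (pow_nonneg hx 1)) (pow_nonneg hu 5)
  have t12 : (0:ℝ) ≤ 103879680 * x ^ 1 * u ^ 6 := mul_nonneg (mul_nonneg (by norm_num) (pow_nonneg hx 1)) (pow_nonneg hu 6)
  have t13 : (0:ℝ) ≤ 95860032 * x ^ 2 := mul_nonneg (by norm_num) (pow_nonneg hx 2)
  have t14 : (0:ℝ) ≤ 981555136 * x ^ 2 * u ^ 1 := mul_nonneg (mul_nonneg (by norm_num) (pow_nonneg hx 2)) (pow_nonneg hu 1)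
  have t15 : (0:ℝ) ≤ 3607477056 * x ^ 2 * u ^ 2 := mul_nonneg (mul_nonneg (by norm_num) (pow_nonneg hx 2)) (pow_nonneg hu 2)
  have t16 : (0:ℝ) ≤ 6136311680 * x ^ 2 * u ^ 3 := mul_nonneg (mul_nonneg (by norm_num) (pow_nonneg hx 2)) (pow_nonneg hu 3)
  have t17 : (0:ℝ) ≤ 5039925376 * x ^ 2 * u ^ 4 := mul_nonneg (mul_nonneg (by norm_num) (pow_nonneg hx 2)) (pow_nonneg hu 4)
  have t18 : (0:ℝ) ≤ 1817057280 * x ^ 2 * u ^ 5 := mul_nonneg (mul_nonneg (by norm_num) (pow_nonneg hx 2)) (pow_nonneg hu 5)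
  have t19 : (0:ℝ) ≤ 196778240 * x ^ 2 * u ^ 6 := mul_nonneg (mul_nonneg (by norm_num) (pow_nonneg hx 2)) (pow_nonneg hu 6)
  have t20 : (0:ℝ) ≤ 19786592 * x ^ 3 := mul_nonneg (by norm_num) (pow_nonneg hx 3)
  have t21 : (0:ℝ) ≤ 272867680 * x ^ 3 * u ^ 1 := mul_nonneg (mul_nonneg (by norm_num) (pow_nonneg hx 3)) (pow_nonneg hu 1)
  have t22 : (0:ℝ) ≤ 1290753128 * x ^ 3 * u ^ 2 := mul_nonneg (mul_nonneg (by norm_num) (pow_nonneg hx 3)) (pow_nonneg hu 2)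
  have t23 : (0:ℝ) ≤ 2750701504 * x ^ 3 * u ^ 3 := mul_nonneg (mul_nonneg (by norm_num) (pow_nonneg hx 3)) (pow_nonneg hu 3)
  have t24 : (0:ℝ) ≤ 2799236176 * x ^ 3 * u ^ 4 := mul_nonneg (mul_nonneg (by norm_num) (pow_nonneg hx 3)) (pow_nonneg hu 4)
  have t25 : (0:ℝ) ≤ 1265342336 * x ^ 3 * u ^ 5 := mul_nonneg (mul_nonneg (by norm_num) (pow_nonneg hx 3)) (pow_nonneg hu 5)
  have t26 : (0:ℝ) ≤ 185447360 * x ^ 3 * u ^ 6 := mul_nonneg (mul_nonneg (by norm_num) (pow_nonneg hx 3)) (pow_nonneg hu 6)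
  have t27 : (0:ℝ) ≤ 2290032 * x ^ 4 := mul_nonneg (by norm_num) (pow_nonneg hx 4)
  have t28 : (0:ℝ) ≤ 45190544 * x ^ 4 * u ^ 1 := mul_nonneg (mul_nonneg (by norm_num) (pow_nonneg hx 4)) (pow_nonneg hu 1)
  have t29 : (0:ℝ) ≤ 285556180 * x ^ 4 * u ^ 2 := mul_nonneg (mul_nonneg (by norm_num) (pow_nonneg hx 4)) (pow_nonneg hu 2)
  have t30 : (0:ℝ) ≤ 780477600 * x ^ 4 * u ^ 3 := mul_nonneg (mul_nonneg (by norm_num) (pow_nonneg hx 4)) (pow_nonneg hu 3)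
  have t31 : (0:ℝ) ≤ 996443528 * x ^ 4 * u ^ 4 := mul_nonneg (mul_nonneg (by norm_num) (pow_nonneg hx 4)) (pow_nonneg hu 4)
  have t32 : (0:ℝ) ≤ 563356480 * x ^ 4 * u ^ 5 := mul_nonneg (mul_nonneg (by norm_num) (pow_nonneg hx 4)) (pow_nonneg hu 5)
  have t33 : (0:ℝ) ≤ 106646736 * x ^ 4 * u ^ 6 := mul_nonneg (mul_nonneg (by norm_num) (pow_nonneg hx 4)) (pow_nonneg hu 6)
  have t34 : (0:ℝ) ≤ 140896 * x ^ 5 := mul_nonneg (by norm_num) (pow_nonneg hx 5)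
  have t35 : (0:ℝ) ≤ 4460408 * x ^ 5 * u ^ 1 := mul_nonneg (mul_nonneg (by norm_num) (pow_nonneg hx 5)) (pow_nonneg hu 1)
  have t36 : (0:ℝ) ≤ 40033582 * x ^ 5 * u ^ 2 := mul_nonneg (mul_nonneg (by norm_num) (pow_nonneg hx 5)) (pow_nonneg hu 2)
  have t37 : (0:ℝ) ≤ 145610864 * x ^ 5 * u ^ 3 := mul_nonneg (mul_nonneg (by norm_num) (pow_nonneg hx 5)) (pow_nonneg hu 3)
  have t38 : (0:ℝ) ≤ 238414340 * x ^ 5 * u ^ 4 := mul_nonneg (mul_nonneg (by norm_num) (pow_nonneg hx 5)) (pow_nonneg hu 4)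
  have t39 : (0:ℝ) ≤ 170013056 * x ^ 5 * u ^ 5 := mul_nonneg (mul_nonneg (by norm_num) (pow_nonneg hx 5)) (pow_nonneg hu 5)
  have t40 : (0:ℝ) ≤ 40924400 * x ^ 5 * u ^ 6 := mul_nonneg (mul_nonneg (by norm_num) (pow_nonneg hx 5)) (pow_nonneg hu 6)
  have t41 : (0:ℝ) ≤ 3600 * x ^ 6 := mul_nonneg (by norm_num) (pow_nonneg hx 6)
  have t42 : (0:ℝ) ≤ 243024 * x ^ 6 * u ^ 1 := mul_nonneg (mul_nonneg (by norm_num) (pow_nonneg hx 6)) (pow_nonneg hu 1)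
  have t43 : (0:ℝ) ≤ 3475735 * x ^ 6 * u ^ 2 := mul_nonneg (mul_nonneg (by norm_num) (pow_nonneg hx 6)) (pow_nonneg hu 2)
  have t44 : (0:ℝ) ≤ 17886400 * x ^ 6 * u ^ 3 := mul_nonneg (mul_nonneg (by norm_num) (pow_nonneg hx 6)) (pow_nonneg hu 3)
  have t45 : (0:ℝ) ≤ 38934630 * x ^ 6 * u ^ 4 := mul_nonneg (mul_nonneg (by norm_num) (pow_nonneg hx 6)) (pow_nonneg hu 4)
  have t46 : (0:ℝ) ≤ 35708912 * x ^ 6 * u ^ 5 := mul_nonneg (mul_nonneg (by norm_num) (pow_nonneg hx 6)) (pow_nonneg hu 5)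
  have t47 : (0:ℝ) ≤ 10946860 * x ^ 6 * u ^ 6 := mul_nonneg (mul_nonneg (by norm_num) (pow_nonneg hx 6)) (pow_nonneg hu 6)
  have t48 : (0:ℝ) ≤ 5640 * x ^ 7 * u ^ 1 := mul_nonneg (mul_nonneg (by norm_num) (pow_nonneg hx 7)) (pow_nonneg hu 1)
  have t49 : (0:ℝ) ≤ 170958 * x ^ 7 * u ^ 2 := mul_nonneg (mul_nonneg (by norm_num) (pow_nonneg hx 7)) (pow_nonneg hu 2)
  have t50 : (0:ℝ) ≤ 1396416 * x ^ 7 * u ^ 3 := mul_nonneg (mul_nonneg (by norm_num) (pow_nonneg hx 7)) (pow_nonneg hu 3)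
  have t51 : (0:ℝ) ≤ 4293838 * x ^ 7 * u ^ 4 := mul_nonneg (mul_nonneg (by norm_num) (pow_nonneg hx 7)) (pow_nonneg hu 4)
  have t52 : (0:ℝ) ≤ 5242200 * x ^ 7 * u ^ 5 := mul_nonneg (mul_nonneg (by norm_num) (pow_nonneg hx 7)) (pow_nonneg hu 5)
  have t53 : (0:ℝ) ≤ 2078780 * x ^ 7 * u ^ 6 := mul_nonneg (mul_nonneg (by norm_num) (pow_nonneg hx 7)) (pow_nonneg hu 6)
  have t54 : (0:ℝ) ≤ 3649 * x ^ 8 * u ^ 2 := mul_nonneg (mul_nonneg (by norm_num) (pow_nonneg hx 8)) (pow_nonneg hu 2)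
  have t55 : (0:ℝ) ≤ 62928 * x ^ 8 * u ^ 3 := mul_nonneg (mul_nonneg (by norm_num) (pow_nonneg hx 8)) (pow_nonneg hu 3)
  have t56 : (0:ℝ) ≤ 306524 * x ^ 8 * u ^ 4 := mul_nonneg (mul_nonneg (by norm_num) (pow_nonneg hx 8)) (pow_nonneg hu 4)
  have t57 : (0:ℝ) ≤ 528744 * x ^ 8 * u ^ 5 := mul_nonneg (mul_nonneg (by norm_num) (pow_nonneg hx 8)) (pow_nonneg hu 5)
  have t58 : (0:ℝ) ≤ 280038 * x ^ 8 * u ^ 6 := mul_nonneg (mul_nonneg (by norm_num) (pow_nonneg hx 8)) (pow_nonneg hu 6)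
  have t59 : (0:ℝ) ≤ 1248 * x ^ 9 * u ^ 3 := mul_nonneg (mul_nonneg (by norm_num) (pow_nonneg hx 9)) (pow_nonneg hu 3)
  have t60 : (0:ℝ) ≤ 12806 * x ^ 9 * u ^ 4 := mul_nonneg (mul_nonneg (by norm_num) (pow_nonneg hx 9)) (pow_nonneg hu 4)
  have t61 : (0:ℝ) ≤ 34976 * x ^ 9 * u ^ 5 := mul_nonneg (mul_nonneg (by norm_num) (pow_nonneg hx 9)) (pow_nonneg hu 5)
  have t62 : (0:ℝ) ≤ 26220 * x ^ 9 * u ^ 6 := mul_nonneg (mul_nonneg (by norm_num) (pow_nonneg hx 9)) (pow_nonneg hu 6)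
  have t63 : (0:ℝ) ≤ 238 * x ^ 10 * u ^ 4 := mul_nonneg (mul_nonneg (by norm_num) (pow_nonneg hx 10)) (pow_nonneg hu 4)
  have t64 : (0:ℝ) ≤ 1368 * x ^ 10 * u ^ 5 := mul_nonneg (mul_nonneg (by norm_num) (pow_nonneg hx 10)) (pow_nonneg hu 5)
  have t65 : (0:ℝ) ≤ 1625 * x ^ 10 * u ^ 6 := mul_nonneg (mul_nonneg (by norm_num) (pow_nonneg hx 10)) (pow_nonneg hu 6)
  have t66 : (0:ℝ) ≤ 24 * x ^ 11 * u ^ 5 := mul_nonneg (mul_nonneg (by norm_num) (pow_nonneg hx 11)) (pow_nonneg hu 5)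
  have t67 : (0:ℝ) ≤ 60 * x ^ 11 * u ^ 6 := mul_nonneg (mul_nonneg (by norm_num) (pow_nonneg hx 11)) (pow_nonneg hu 6)
  have t68 : (0:ℝ) ≤ 1 * x ^ 12 * u ^ 6 := mul_nonneg (mul_nonneg (by norm_num) (pow_nonneg hx 12)) (pow_nonneg hu 6)
  linarith

set_option maxHeartbeats 1000000 in
lemma FIV4_eq_aux (m : ℕ) (μ : ℝ) :
    FIV4 m μ = μ ^ 6 * (264176640 + (1641056256 * μ ^ 1 + 3879816192 * μ ^ 2 + 4365914112 * μ ^ 3 + 2348623872 * μ ^ 4 + 498548736 * μ ^ 5 + 12902400 * μ ^ 6 + 246911616 * ((m:ℝ) - 5) ^ 1 + 1946687232 * ((m:ℝ) - 5) ^ 1 * μ ^ 1 + 5693583744 * ((m:ℝ) - 5) ^ 1 * μ ^ 2 + 7844863488 * ((m:ℝ) - 5) ^ 1 * μ ^ 3 + 5224113408 * ((m:ℝ) - 5) ^ 1 * μ ^ 4 + 1476937728 * ((m:ℝ) - 5) ^ 1 * μ ^ 5 + 103879680 * ((m:ℝ) - 5) ^ 1 * μ ^ 6 + 95860032 * ((m:ℝ)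 - 5) ^ 2 + 981555136 * ((m:ℝ) - 5) ^ 2 * μ ^ 1 + 3607477056 * ((m:ℝ) - 5) ^ 2 * μ ^ 2 + 6136311680 * ((m:ℝ) - 5) ^ 2 * μ ^ 3 + 5039925376 * ((m:ℝ) - 5) ^ 2 * μ ^ 4 + 1817057280 * ((m:ℝ) - 5) ^ 2 * μ ^ 5 + 196778240 * ((m:ℝ) - 5) ^ 2 * μ ^ 6 + 19786592 * ((m:ℝ) - 5) ^ 3 + 272867680 * ((m:ℝ) - 5) ^ 3 * μ ^ 1 + 1290753128 * ((m:ℝ) - 5) ^ 3 * μ ^ 2 + 2750701504 * ((m:ℝ) - 5) ^ 3 * μ ^ 3 + 2799236176 * ((m:ℝ) - 5) ^ 3 * μ ^ 4 + 1265342336 * ((m:ℝ) - 5) ^ 3 * μ ^ 5 + 185447360 * ((m:ℝ) - 5) ^ 3 * μ ^ 6 + 2290032 * ((m:ℝ) - 5) ^ 4 + 45190544 * ((m:ℝ) - 5) ^ 4 * μ ^ 1 + 285556180 * ((m:ℝ) - 5) ^ 4 * μ ^ 2 + 780477600 * ((m:ℝ) - 5) ^ 4 * μ ^ 3 + 996443528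 * ((m:ℝ) - 5) ^ 4 * μ ^ 4 + 563356480 * ((m:ℝ) - 5) ^ 4 * μ ^ 5 + 106646736 * ((m:ℝ) - 5) ^ 4 * μ ^ 6 + 140896 * ((m:ℝ) - 5) ^ 5 + 4460408 * ((m:ℝ) - 5) ^ 5 * μ ^ 1 + 40033582 * ((m:ℝ) - 5) ^ 5 * μ ^ 2 + 145610864 * ((m:ℝ) - 5) ^ 5 * μ ^ 3 + 238414340 * ((m:ℝ) - 5) ^ 5 * μ ^ 4 + 170013056 * ((m:ℝ) - 5) ^ 5 * μ ^ 5 + 40924400 * ((m:ℝ) - 5) ^ 5 * μ ^ 6 + 3600 * ((m:ℝ) - 5) ^ 6 + 243024 * ((m:ℝ) - 5) ^ 6 * μ ^ 1 + 3475735 * ((m:ℝ) - 5) ^ 6 * μ ^ 2 + 17886400 * ((m:ℝ) - 5) ^ 6 * μ ^ 3 + 38934630 * ((m:ℝ) - 5) ^ 6 * μ ^ 4 + 35708912 * ((m:ℝ) - 5) ^ 6 * μ ^ 5 + 10946860 * ((m:ℝ) - 5) ^ 6 * μ ^ 6 + 5640 * ((m:ℝ) - 5) ^ 7 * μ ^ 1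 + 170958 * ((m:ℝ) - 5) ^ 7 * μ ^ 2 + 1396416 * ((m:ℝ) - 5) ^ 7 * μ ^ 3 + 4293838 * ((m:ℝ) - 5) ^ 7 * μ ^ 4 + 5242200 * ((m:ℝ) - 5) ^ 7 * μ ^ 5 + 2078780 * ((m:ℝ) - 5) ^ 7 * μ ^ 6 + 3649 * ((m:ℝ) - 5) ^ 8 * μ ^ 2 + 62928 * ((m:ℝ) - 5) ^ 8 * μ ^ 3 + 306524 * ((m:ℝ) - 5) ^ 8 * μ ^ 4 + 528744 * ((m:ℝ) - 5) ^ 8 * μ ^ 5 + 280038 * ((m:ℝ) - 5) ^ 8 * μ ^ 6 + 1248 * ((m:ℝ) - 5) ^ 9 * μ ^ 3 + 12806 * ((m:ℝ) - 5) ^ 9 * μ ^ 4 + 34976 * ((m:ℝ) - 5) ^ 9 * μ ^ 5 + 26220 * ((m:ℝ) - 5) ^ 9 * μ ^ 6 + 238 * ((m:ℝ) - 5) ^ 10 * μ ^ 4 + 1368 * ((m:ℝ) - 5) ^ 10 * μ ^ 5 + 1625 * ((m:ℝ) - 5) ^ 10 * μ ^ 6 + 24 * ((m:ℝ) - 5)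 ^ 11 * μ ^ 5 + 60 * ((m:ℝ) - 5) ^ 11 * μ ^ 6 + 1 * ((m:ℝ) - 5) ^ 12 * μ ^ 6)) := by
  unfold FIV4 coeffA coeffB coeffC coeffD coeffE
  ring

lemma FIV4_pos_of_five_le (m : ℕ) (hm : 5 ≤ m) (μ : ℝ) (hμ : 0 < μ) : 0 < FIV4 m μ := by
  have hx : (0:ℝ) ≤ (m:ℝ) - 5 := by
    have : (5:ℝ) ≤ (m:ℝ) := by exact_mod_cast hm
    linarith
  have h := Gaux_nonneg ((m:ℝ) - 5) μ hx hμ.le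
  rw [FIV4_eq_aux]
  have h6 : 0 < μ ^ 6 := pow_pos hμ 6
  nlinarith [h, h6]

set_option maxHeartbeats 1000000 in
/-- Hurwitz determinant `Δ₃` for type `IV₄`:
`q_m¹(μ) = (1/((m+1)μ))·(dP_μ^m/dη)(1/2)`; `F_m(μ) > 0` for all `μ > 0` when
`m > 4`; for `1 ≤ m ≤ 4` and `μ > 0`, `F_m(μ) > 0 ∧ q_m¹(μ) ≥ 0` holds iff
`μ ≤ μ_m¹`, `μ_m¹` being the unique positive root of `q_m¹`. -/
theorem FIV4_sign :
    (∀ m : ℕ, 1 ≤ m → ∀ μ : ℝ, 0 < μ →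
      qIV4' m μ = (1 / (((m : ℝ) + 1) * μ)) * deriv (fun η : ℝ => PIV4 m μ η) (1 / 2)) ∧
    (∀ m : ℕ, 4 < m → ∀ μ : ℝ, 0 < μ → 0 < FIV4 m μ) ∧
    (∀ m : ℕ, 1 ≤ m → m ≤ 4 → ∀ r : ℝ, 0 < r → qIV4' m r = 0 →
      (∀ x : ℝ, 0 < x → qIV4' m x = 0 → x = r) →
      ∀ μ : ℝ, 0 < μ → ((0 < FIV4 m μ ∧ 0 ≤ qIV4' m μ) ↔ μ ≤ r)) := by
  refine ⟨?_, ?_, ?_⟩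
  · intro m hm μ hμ
    have hd : HasDerivAt (fun η : ℝ => PIV4 m μ η)
        (0 + coeffB m μ * 1 + coeffC m μ * ((2:ℕ) * (1/2:ℝ) ^ 1)
          + coeffD m μ * ((3:ℕ) * (1/2:ℝ) ^ 2) + coeffE m μ * ((4:ℕ) * (1/2:ℝ) ^ 3)) (1/2) := by
      unfold PIV4
      exact ((((hasDerivAt_const _ _).add ((hasDerivAt_id _).const_mul _)).add
        ((hasDerivAt_pow 2 _).const_mul _)).add
        ((hasDerivAt_pow 3 _).const_mul _)).add ((hasDerivAt_pow 4 _).const_mul _)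
    rw [hd.deriv]
    have h1 : ((m:ℝ) + 1) ≠ 0 := by positivity
    have h2 : μ ≠ 0 := ne_of_gt hμ
    field_simp
    unfold qIV4' coeffB coeffC coeffD coeffE
    ring
  · intro m hm μ hμ
    exact FIV4_pos_of_five_le m hm μ hμ
  · intro m hm1 hm4 r hr hqr huniq μ hμ
    interval_cases m
    · -- m = 1
      have hfr : 7 - 4 * r ^ 2 = 0 := by
        have h0 : (4) * (7 - 4 * r ^ 2) = 0 := by
          have h := hqr
          unfold qIV4' at h
          push_cast at h
          linear_combination h
        rcases mul_eq_zero.mp h0 with h | h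
        · nlinarith [hr]
        · exact h
      have h2 : (7 - 4 * r ^ 2) * μ = 0 := by rw [hfr]; ring
      have h7 : (0:ℝ) < 7 + 4 * μ * r := by nlinarith [mul_pos hμ hr]
      constructor
      · rintro ⟨-, hq⟩
        unfold qIV4' at hq
        push_cast at hq
        have haux : (0:ℝ) < 4 := by linarith
        have hq' : (0:ℝ) ≤ 7 - 4 * μ ^ 2 := by nlinarith [hq, haux]
        have h1' : (0:ℝ) ≤ (7 - 4 * μ ^ 2) * r := mul_nonneg hq' hr.le
        have key : (0:ℝ) ≤ (r - μ) * (7 + 4 * μ * r) := by nlinarith [h1', h2]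
        nlinarith [key, h7]
      · intro hle
        have key2 : (0:ℝ) ≤ (r - μ) * (7 + 4 * μ * r) := mul_nonneg (by linarith) h7.le
        have h4' : (0:ℝ) ≤ (7 - 4 * μ ^ 2) * r := by nlinarith [key2, h2]
        have hq' : (0:ℝ) ≤ 7 - 4 * μ ^ 2 := by nlinarith [h4', hr]
        refine ⟨?_, ?_⟩
        · have hRr : r ≤ 3/2 := by nlinarith [hfr, hr]
          have hR : μ ≤ 3/2 := le_trans hle hRr
          have hRm : (0:ℝ) ≤ 3/2 - μ := by linarith
          have heq : FIV4 1 μ = μ ^ 6 * (665088 - 316416 * μ ^ 2 + 24576 * μ ^ 4) := by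
            unfold FIV4 coeffA coeffB coeffC coeffD coeffE
            push_cast
            ring
          rw [heq]
          refine mul_pos (pow_pos hμ 6) ?_
          nlinarith [sq_nonneg (9/4 - μ ^ 2), mul_nonneg hRm (by linarith : (0:ℝ) ≤ 3/2 + μ), hμ.le]
        · have haux : (0:ℝ) ≤ 4 := by linarith
          have := mul_nonneg haux hq'
          unfold qIV4'
          push_cast
          nlinarith [this]
    · -- m = 2
      have hfr : 7 + 4 * r - 5 * r ^ 2 = 0 := by
        have h0 : (4 + r) * (7 + 4 * r - 5 * r ^ 2) = 0 := by
          have h := hqr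
          unfold qIV4' at h
          push_cast at h
          linear_combination h
        rcases mul_eq_zero.mp h0 with h | h
        · nlinarith [hr]
        · exact h
      have h2 : (7 + 4 * r - 5 * r ^ 2) * μ = 0 := by rw [hfr]; ring
      have h7 : (0:ℝ) < 7 + 5 * μ * r := by nlinarith [mul_pos hμ hr]
      constructor
      · rintro ⟨-, hq⟩
        unfold qIV4' at hq
        push_cast at hq
        have haux : (0:ℝ) < 4 + μ := by linarith
        have hq' : (0:ℝ) ≤ 7 + 4 * μ - 5 * μ ^ 2 := by nlinarith [hq, haux]
        have h1' : (0:ℝ) ≤ (7 + 4 * μ - 5 * μ ^ 2) * r := mul_nonneg hq' hr.le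
        have key : (0:ℝ) ≤ (r - μ) * (7 + 5 * μ * r) := by nlinarith [h1', h2]
        nlinarith [key, h7]
      · intro hle
        have key2 : (0:ℝ) ≤ (r - μ) * (7 + 5 * μ * r) := mul_nonneg (by linarith) h7.le
        have h4' : (0:ℝ) ≤ (7 + 4 * μ - 5 * μ ^ 2) * r := by nlinarith [key2, h2]
        have hq' : (0:ℝ) ≤ 7 + 4 * μ - 5 * μ ^ 2 := by nlinarith [h4', hr]
        refine ⟨?_, ?_⟩
        · have hRr : r ≤ 2 := by nlinarith [hfr, hr]
          have hR : μ ≤ 2 := le_trans hle hRr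
          have hRm : (0:ℝ) ≤ 2 - μ := by linarith
          have heq : FIV4 2 μ = μ ^ 6 * (5823360 + 8948160 * μ + 1780920 * μ ^ 2 - 2036160 * μ ^ 3 - 704880 * μ ^ 4 + 12600 * μ ^ 6) := by
            unfold FIV4 coeffA coeffB coeffC coeffD coeffE
            push_cast
            ring
          rw [heq]
          refine mul_pos (pow_pos hμ 6) ?_
          nlinarith [mul_nonneg (pow_nonneg hμ.le 3) hRm, mul_nonneg (pow_nonneg hμ.le 2) hRm, mul_nonneg hμ.le hRm, pow_nonneg hμ.le 6, hμ.le]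
        · have haux : (0:ℝ) ≤ 4 + μ := by linarith
          have := mul_nonneg haux hq'
          unfold qIV4'
          push_cast
          nlinarith [this]
    · -- m = 3
      have hfr : 7 + 8 * r - 5 * r ^ 2 = 0 := by
        have h0 : (4 + 2 * r) * (7 + 8 * r - 5 * r ^ 2) = 0 := by
          have h := hqr
          unfold qIV4' at h
          push_cast at h
          linear_combination h
        rcases mul_eq_zero.mp h0 with h | h
        · nlinarith [hr]
        · exact h
      have h2 : (7 + 8 * r - 5 * r ^ 2) * μ = 0 := by rw [hfr]; ring
      have h7 : (0:ℝ) < 7 + 5 * μ * r := by nlinarith [mul_pos hμ hr]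
      constructor
      · rintro ⟨-, hq⟩
        unfold qIV4' at hq
        push_cast at hq
        have haux : (0:ℝ) < 4 + 2 * μ := by linarith
        have hq' : (0:ℝ) ≤ 7 + 8 * μ - 5 * μ ^ 2 := by nlinarith [hq, haux]
        have h1' : (0:ℝ) ≤ (7 + 8 * μ - 5 * μ ^ 2) * r := mul_nonneg hq' hr.le
        have key : (0:ℝ) ≤ (r - μ) * (7 + 5 * μ * r) := by nlinarith [h1', h2]
        nlinarith [key, h7]
      · intro hle
        have key2 : (0:ℝ) ≤ (r - μ) * (7 + 5 * μ * r) := mul_nonneg (by linarith) h7.le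
        have h4' : (0:ℝ) ≤ (7 + 8 * μ - 5 * μ ^ 2) * r := by nlinarith [key2, h2]
        have hq' : (0:ℝ) ≤ 7 + 8 * μ - 5 * μ ^ 2 := by nlinarith [h4', hr]
        refine ⟨?_, ?_⟩
        · have hRr : r ≤ 3 := by nlinarith [hfr, hr]
          have hR : μ ≤ 3 := le_trans hle hRr
          have hRm : (0:ℝ) ≤ 3 - μ := by linarith
          have heq : FIV4 3 μ = μ ^ 6 * (27863040 + 86108160 * μ + 85854720 * μ ^ 2 + 25374720 * μ ^ 3 - 5591040 * μ ^ 4 - 3379200 * μ ^ 5 - 230400 * μ ^ 6) := by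
            unfold FIV4 coeffA coeffB coeffC coeffD coeffE
            push_cast
            ring
          rw [heq]
          refine mul_pos (pow_pos hμ 6) ?_
          nlinarith [mul_nonneg (pow_nonneg hμ.le 5) hRm, mul_nonneg (pow_nonneg hμ.le 4) hRm, mul_nonneg (pow_nonneg hμ.le 3) hRm, mul_nonneg (pow_nonneg hμ.le 2) hRm, sq_nonneg μ, hμ.le]
        · have haux : (0:ℝ) ≤ 4 + 2 * μ := by linarith
          have := mul_nonneg haux hq'
          unfold qIV4'
          push_cast
          nlinarith [this]
    · -- m = 4
      have hfr : 7 + 12 * r - 4 * r ^ 2 = 0 := by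
        have h0 : (4 + 3 * r) * (7 + 12 * r - 4 * r ^ 2) = 0 := by
          have h := hqr
          unfold qIV4' at h
          push_cast at h
          linear_combination h
        rcases mul_eq_zero.mp h0 with h | h
        · nlinarith [hr]
        · exact h
      have h2 : (7 + 12 * r - 4 * r ^ 2) * μ = 0 := by rw [hfr]; ring
      have h7 : (0:ℝ) < 7 + 4 * μ * r := by nlinarith [mul_pos hμ hr]
      constructor
      · rintro ⟨-, hq⟩
        unfold qIV4' at hq
        push_cast at hq
        have haux : (0:ℝ) < 4 + 3 * μ := by linarith
        have hq' : (0:ℝ) ≤ 7 + 12 * μ - 4 * μ ^ 2 := by nlinarith [hq, haux]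
        have h1' : (0:ℝ) ≤ (7 + 12 * μ - 4 * μ ^ 2) * r := mul_nonneg hq' hr.le
        have key : (0:ℝ) ≤ (r - μ) * (7 + 4 * μ * r) := by nlinarith [h1', h2]
        nlinarith [key, h7]
      · intro hle
        have key2 : (0:ℝ) ≤ (r - μ) * (7 + 4 * μ * r) := mul_nonneg (by linarith) h7.le
        have h4' : (0:ℝ) ≤ (7 + 12 * μ - 4 * μ ^ 2) * r := by nlinarith [key2, h2]
        have hq' : (0:ℝ) ≤ 7 + 12 * μ - 4 * μ ^ 2 := by nlinarith [h4', hr]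
        refine ⟨?_, ?_⟩
        · have hRr : r ≤ 4 := by nlinarith [hfr, hr]
          have hR : μ ≤ 4 := le_trans hle hRr
          have hRm : (0:ℝ) ≤ 4 - μ := by linarith
          have heq : FIV4 4 μ = μ ^ 6 * (95491200 + 444024000 * μ + 751787400 * μ ^ 2 + 558079200 * μ ^ 3 + 158163600 * μ ^ 4 - 2368800 * μ ^ 5 - 4800600 * μ ^ 6) := by
            unfold FIV4 coeffA coeffB coeffC coeffD coeffE
            push_cast
            ring
          rw [heq]
          refine mul_pos (pow_pos hμ 6) ?_
          nlinarith [mul_nonneg (pow_nonneg hμ.le 5) hRm, mul_nonneg (pow_nonneg hμ.le 4) hRm, pow_nonneg hμ.le 4, hμ.le]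
        · have haux : (0:ℝ) ≤ 4 + 3 * μ := by linarith
          have := mul_nonneg haux hq'
          unfold qIV4'
          push_cast
          nlinarith [this]
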